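/- arXiv:1809.10022 — 3 statements merged into one kernel-verified Lean document; each statement's English description precedes it below -/
import Mathlib

section
/- Let T : X → X be a continuous map on a metric space X, let 𝒞 be a set of T-invariant Borel probability measures, and let 𝒫 = {P_1,…,P_N} be a finite Borel partition of X such that μ(∂P_i) = 0 for every μ ∈ 𝒞 and every i. Then the map μ ↦ h_μ(T,𝒫) := lim_n (1/n) H_μ(⋁_{i=0}^{n-1} T^{-i}𝒫) is upper semi-continuous on 𝒞 with respect to the weak* topology. -/
/-!
Each term `(1/n) H_μ(𝒫ⁿ)` of the infimum defining `h_μ(T,𝒫)` is weak*-continuous at every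
`μ ∈ 𝒞`: since `T` is continuous and preserves `μ`, the boundary of an atom of `𝒫ⁿ` lies in a
finite union of preimages `T^{-i} ∂P_j`, which are `μ`-null, so by the portmanteau theorem the
measures of the atoms depend continuously on the measure. An infimum of continuous functions is
upper semicontinuous.
-/

open MeasureTheory Filter Topology
open scoped ENNReal

/-- Entropy of a finite (indexed) collection of sets: `-∑ μ(Pᵢ) log μ(Pᵢ)`
(with `0 log 0 = 0`, automatic since `Real.log 0 = 0`). -/
noncomputable def partEnt {X : Type*} [MeasurableSpace X] (μ : Measure X)
    {ι : Type*} [Fintype ι] (P : ι → Set X) : ℝ :=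
  -∑ i, ((μ (P i)).toReal * Real.log (μ (P i)).toReal)

/-- The common refinement `⋁_{i=0}^{n-1} T^{-i} 𝒫`, indexed by words `s : Fin n → Fin N`. -/
def refineP {X : Type*} (T : X → X) {N : ℕ} (P : Fin N → Set X) (n : ℕ) :
    (Fin n → Fin N) → Set X :=
  fun s => ⋂ i : Fin n, (T^[(i : ℕ)]) ⁻¹' P (s i)

/-- Entropy of `μ` relative to the finite partition `P`:
`h_μ(T,𝒫) = inf_n (1/n) H_μ(𝒫ⁿ)` (which equals the limit, by subadditivity). -/
noncomputable def dynEnt {X : Type*} [MeasurableSpace X] (T : X → X) (μ : Measure X)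
    {N : ℕ} (P : Fin N → Set X) : ℝ :=
  ⨅ n : ℕ, partEnt μ (refineP T P (n + 1)) / (n + 1)

/-- `P` is a finite Borel partition of `X`. -/
def IsFinPartition {X : Type*} [MeasurableSpace X] {N : ℕ} (P : Fin N → Set X) : Prop :=
  (∀ i, MeasurableSet (P i)) ∧ (Pairwise fun i j => Disjoint (P i) (P j)) ∧
    (⋃ i, P i) = Set.univ

/-- Kolmogorov–Sinai entropy of `(T,μ)`: supremum of `h_μ(T,𝒫)` over all finite Borel
partitions `𝒫`, valued in `ℝ≥0∞`. -/
noncomputable def KSEnt {X : Type*} [MeasurableSpace X] (T : X → X) (μ : Measure X) : ℝ≥0∞ :=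
  ⨆ (N : ℕ) (P : {P : Fin N → Set X // IsFinPartition P}), ENNReal.ofReal (dynEnt T μ P.1)

open Set

theorem frontier_iInter_subset_of_finite {X ι : Type*} [TopologicalSpace X] [Finite ι]
    (A : ι → Set X) : frontier (⋂ i, A i) ⊆ ⋃ i, frontier (A i) := by
  intro x ⟨hcl, hint⟩
  simp only [interior_iInter_of_finite, mem_iInter, not_forall] at hint
  obtain ⟨i, hi⟩ := hint
  exact mem_iUnion.2 ⟨i, closure_mono (iInter_subset A i) hcl, hi⟩

theorem measurePreserving_of_measure_preimage_eq {X : Type*} [MeasurableSpace X] {T : X → X}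
    {μ : Measure X} (hT : Measurable T)
    (hinv : ∀ A, MeasurableSet A → μ (T ⁻¹' A) = μ A) : MeasurePreserving T μ μ :=
  ⟨hT, Measure.ext fun A hA => by rw [Measure.map_apply hT hA, hinv A hA]⟩

theorem measure_frontier_refineP_eq_zero {X : Type*} [TopologicalSpace X] [MeasurableSpace X]
    [OpensMeasurableSpace X] {T : X → X} {μ : Measure X} (hT : Continuous T)
    (hμ : MeasurePreserving T μ μ) {N : ℕ} {P : Fin N → Set X}
    (hbd : ∀ i, μ (frontier (P i)) = 0) (n : ℕ) (s : Fin n → Fin N) :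
    μ (frontier (refineP T P n s)) = 0 := by
  have hsub : frontier (refineP T P n s) ⊆ ⋃ i : Fin n, T^[i] ⁻¹' frontier (P (s i)) :=
    (frontier_iInter_subset_of_finite _).trans
      (iUnion_mono fun i => (hT.iterate _).frontier_preimage_subset _)
  refine measure_mono_null hsub (measure_iUnion_null fun i => ?_)
  rw [(hμ.iterate i).measure_preimage isClosed_frontier.measurableSet.nullMeasurableSet, hbd]

theorem partEnt_nonneg {X : Type*} [MeasurableSpace X] (μ : Measure X) [IsProbabilityMeasure μ]
    {ι : Type*} [Fintype ι] (P : ι → Set X) : 0 ≤ partEnt μ P := by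
  rw [partEnt, ← Finset.sum_neg_distrib]
  refine Finset.sum_nonneg fun i _ => ?_
  simpa only [Real.negMulLog, neg_mul] using
    Real.negMulLog_nonneg ENNReal.toReal_nonneg (measureReal_le_one (μ := μ) (s := P i))

theorem continuousAt_partEnt_of_null_frontier {X : Type*} [TopologicalSpace X]
    [MeasurableSpace X] [OpensMeasurableSpace X] [HasOuterApproxClosed X] {ι : Type*} [Fintype ι]
    (P : ι → Set X) {μ₀ : ProbabilityMeasure X} (hbd : ∀ i, (μ₀ : Measure X) (frontier (P i)) = 0) :
    ContinuousAt (fun μ : ProbabilityMeasure X => partEnt (μ : Measure X) P) μ₀ := by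
  refine (tendsto_finsetSum _ fun i _ => ?_).neg
  have hPi := ProbabilityMeasure.tendsto_measure_of_null_frontier_of_tendsto' tendsto_id (hbd i)
  exact (Real.continuous_mul_log.tendsto _).comp
    ((ENNReal.tendsto_toReal (measure_ne_top _ _)).comp hPi)

theorem bddBelow_range_partEnt_refineP_div {X : Type*} [MeasurableSpace X] (T : X → X)
    (μ : Measure X) [IsProbabilityMeasure μ] {N : ℕ} (P : Fin N → Set X) :
    BddBelow (range fun n : ℕ => partEnt μ (refineP T P (n + 1)) / (n + 1)) :=
  ⟨0, forall_mem_range.2 fun _ => div_nonneg (partEnt_nonneg _ _) (by positivity)⟩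

theorem stmt4_general {X : Type*} [MetricSpace X] [MeasurableSpace X] [BorelSpace X]
    (T : X → X) (hT : Continuous T) (𝒞 : Set (ProbabilityMeasure X))
    (hinv : ∀ μ ∈ 𝒞, ∀ A : Set X, MeasurableSet A →
      (μ : Measure X) (T ⁻¹' A) = (μ : Measure X) A)
    {N : ℕ} (P : Fin N → Set X)
    (hbd : ∀ μ ∈ 𝒞, ∀ i, (μ : Measure X) (frontier (P i)) = 0) :
    UpperSemicontinuousOn (fun μ : ProbabilityMeasure X => dynEnt T (μ : Measure X) P) 𝒞 := by
  refine upperSemicontinuousOn_ciInf (fun μ _ => bddBelow_range_partEnt_refineP_div T μ P)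
    fun n μ hμ => ContinuousWithinAt.upperSemicontinuousWithinAt ?_
  have hpres := measurePreserving_of_measure_preimage_eq hT.measurable (hinv μ hμ)
  exact ((continuousAt_partEnt_of_null_frontier _
    (measure_frontier_refineP_eq_zero hT hpres (hbd μ hμ) _)).div_const _).continuousWithinAt

/-- If `𝒫` is a finite partition whose pieces have `μ`-null boundary for each `μ ∈ 𝒞`,
then `μ ↦ h_μ(T,𝒫)` is upper semi-continuous on `𝒞` (weak* topology). -/
theorem stmt4 {X : Type*} [MetricSpace X] [MeasurableSpace X] [BorelSpace X]
    (T : X → X) (hT : Continuous T) (𝒞 : Set (ProbabilityMeasure X))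
    (hinv : ∀ μ ∈ 𝒞, ∀ A : Set X, MeasurableSet A →
      (μ : Measure X) (T ⁻¹' A) = (μ : Measure X) A)
    {N : ℕ} (P : Fin N → Set X) (hP : IsFinPartition P)
    (hbd : ∀ μ ∈ 𝒞, ∀ i, (μ : Measure X) (frontier (P i)) = 0) :
    UpperSemicontinuousOn (fun μ : ProbabilityMeasure X => dynEnt T (μ : Measure X) P) 𝒞 :=
  stmt4_general T hT 𝒞 hinv P hbd
end

section
/- Let X be a topological space, D ⊆ X a dense Borel subset, and {R_1,…,R_N} a partition of D into sets that are simultaneously open and closed in the subspace topology of D. For each i let R̂_i be the largest open subset of X with R̂_i ∩ D = R_i, and let X₀ = X \ ⋃_{i=1}^N R̂_i. Then {R̂_1,…,R̂_N, X₀} is a partition of X, and for every Borel probability measure μ on X with μ(D) = 1, every element of this partition has boundary of μ-measure zero. -/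
open MeasureTheory

/-- Extending a finite clopen-in-`D` partition of a dense set `D` to a partition
`{R̂₁,…,R̂_N, X₀}` of `X` all of whose elements have null boundary for every probability
measure giving full mass to `D`. -/
theorem stmt9 {X : Type*} [TopologicalSpace X] [MeasurableSpace X] [BorelSpace X]
    {D : Set X} (hD : Dense D) (hDm : MeasurableSet D)
    {N : ℕ} (R : Fin N → Set X) (hRD : ∀ i, R i ⊆ D)
    (hopen : ∀ i, ∃ U : Set X, IsOpen U ∧ U ∩ D = R i)
    (hclosed : ∀ i, ∃ C : Set X, IsClosed C ∧ C ∩ D = R i)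
    (hdisj : Pairwise fun i j => Disjoint (R i) (R j))
    (hcover : (⋃ i, R i) = D)
    (Rhat : Fin N → Set X)
    (hRhat : ∀ i, Rhat i = ⋃₀ {U : Set X | IsOpen U ∧ U ∩ D = R i})
    (X₀ : Set X) (hX₀ : X₀ = Set.univ \ ⋃ i, Rhat i) :
    ((Pairwise fun i j => Disjoint (Rhat i) (Rhat j)) ∧ (∀ i, Disjoint (Rhat i) X₀) ∧
        (∀ i, Rhat i ∩ D = R i) ∧ ((⋃ i, Rhat i) ∪ X₀ = Set.univ)) ∧
      ∀ μ : Measure X, IsProbabilityMeasure μ → μ D = 1 →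
        (∀ i, μ (frontier (Rhat i)) = 0) ∧ μ (frontier X₀) = 0 := by
  have hRopen : ∀ i, IsOpen (Rhat i) := by
    intro i; rw [hRhat]; exact isOpen_sUnion fun U hU => hU.1
  have hsub : ∀ i, R i ⊆ Rhat i := by
    intro i x hx
    obtain ⟨U, hUo, hUD⟩ := hopen i
    have hxU : x ∈ U ∩ D := hUD.symm ▸ hx
    rw [hRhat]
    exact ⟨U, ⟨hUo, hUD⟩, hxU.1⟩
  have hinter : ∀ i, Rhat i ∩ D = R i := by
    intro i
    apply Set.Subset.antisymm
    · rintro x ⟨hx1, hx2⟩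
      rw [hRhat] at hx1
      obtain ⟨U, ⟨hUo, hUD⟩, hxU⟩ := hx1
      exact hUD ▸ ⟨hxU, hx2⟩
    · exact fun x hx => ⟨hsub i hx, hRD i hx⟩
  have hpair : Pairwise fun i j => Disjoint (Rhat i) (Rhat j) := by
    intro i j hij
    rw [Set.disjoint_iff_inter_eq_empty]
    by_contra h
    obtain ⟨x, ⟨hxi, hxj⟩, hxD⟩ :=
      hD.inter_open_nonempty _ ((hRopen i).inter (hRopen j))
        (Set.nonempty_iff_ne_empty.mpr h)
    have h1 : x ∈ R i := (hinter i) ▸ (⟨hxi, hxD⟩ : x ∈ Rhat i ∩ D)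
    have h2 : x ∈ R j := (hinter j) ▸ (⟨hxj, hxD⟩ : x ∈ Rhat j ∩ D)
    exact Set.disjoint_left.mp (hdisj hij) h1 h2
  have hRmem : ∀ x ∈ D, ∃ j, x ∈ R j := by
    intro x hx
    have : x ∈ ⋃ i, R i := hcover ▸ hx
    exact Set.mem_iUnion.mp this
  have hfro : ∀ i, frontier (Rhat i) ⊆ Dᶜ := by
    intro i x hx hxD
    obtain ⟨j, hxj⟩ := hRmem x hxD
    rcases eq_or_ne j i with rfl | hne
    · exact hx.2 (by rw [(hRopen j).interior_eq]; exact hsub j hxj)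
    · obtain ⟨y, hyj, hyi⟩ :=
        mem_closure_iff.mp hx.1 (Rhat j) (hRopen j) (hsub j hxj)
      exact Set.disjoint_left.mp (hpair hne) hyj hyi
  have hfroX : frontier X₀ ⊆ Dᶜ := by
    intro x hx hxD
    obtain ⟨j, hxj⟩ := hRmem x hxD
    have hxU : x ∈ ⋃ i, Rhat i := Set.mem_iUnion.mpr ⟨j, hsub j hxj⟩
    have : frontier X₀ = frontier (⋃ i, Rhat i) := by
      rw [hX₀, ← Set.compl_eq_univ_diff, frontier_compl]
    rw [this] at hx
    exact hx.2 (by rw [(isOpen_iUnion hRopen).interior_eq]; exact hxU)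
  refine ⟨⟨hpair, ?_, hinter, ?_⟩, ?_⟩
  · intro i
    rw [hX₀, Set.disjoint_left]
    intro x hx ⟨_, hx2⟩
    exact hx2 (Set.mem_iUnion.mpr ⟨i, hx⟩)
  · rw [hX₀, ← Set.compl_eq_univ_diff, Set.union_compl_self]
  · intro μ hμ hμD
    have hc : μ Dᶜ = 0 := by
      have := measure_compl hDm (measure_ne_top μ D)
      rw [hμD, measure_univ] at this
      simp [this]
    exact ⟨fun i => measure_mono_null (hfro i) hc, measure_mono_null hfroX hc⟩
end

section
/- Let (Σ,σ) be a countable Markov shift of finite entropy and τ : Σ → ℝ⁺ continuous and bounded away from zero, defining the suspension flow Φ on Y = {(x,t) : 0 ≤ t ≤ τ(x)}/∼. Let ν_n = (μ_n × Leb)/∫τ dμ_n and ν = (μ × Leb)/∫τ dμ be flow-invariant probability measures, with μ_n, μ shift-invariant probability measures with ∫τ dμ_n, ∫τ dμ < ∞. If (ν_n) converges to ν in the weak* topology on measures on Y, then (μ_n) converges to μ in the weak* topology on measures on Σ and lim_{n→∞} ∫τ dμ_n = ∫τ dμ. -/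
/-- The two-sided countable Markov shift space determined by the transition relation `S`
on the countable alphabet `A`: bi-infinite admissible sequences. -/
def CMS {A : Type*} (S : A → A → Prop) : Set (ℤ → A) :=
  {x | ∀ i : ℤ, S (x i) (x (i + 1))}

/-- The left shift map `σ` on the countable Markov shift. -/
def cmsShift {A : Type*} (S : A → A → Prop) : CMS S → CMS S :=
  fun x => ⟨fun i => x.1 (i + 1), fun i => by
    simpa [add_assoc, add_comm, add_left_comm] using x.2 (i + 1)⟩

open MeasureTheory Filter Topology
open scoped ENNReal

/-- The suspension space `Y = {(x,t) : 0 ≤ t ≤ τ(x)}` over the shift space. -/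
def Ysp {A : Type*} (S : A → A → Prop) (τ : CMS S → ℝ) : Set (CMS S × ℝ) :=
  {p | 0 ≤ p.2 ∧ p.2 ≤ τ p.1}

section
set_option linter.unusedSectionVars false
variable {A : Type*} [Countable A] [TopologicalSpace A] [DiscreteTopology A]
    [MeasurableSpace A] [BorelSpace A] (S : A → A → Prop) (τ : CMS S → ℝ)

lemma ysp_measurable (hτcont : Continuous τ) : MeasurableSet (Ysp S τ) := by
  have : IsClosed (Ysp S τ) :=
    (isClosed_le continuous_const continuous_snd).inter
      (isClosed_le continuous_snd (hτcont.comp continuous_fst))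
  exact this.measurableSet

lemma g_integral : ∫ s in (0:ℝ)..1, 6*s*(1-s) = 1 := by
  have h : ∀ s : ℝ, 6*s*(1-s) = 6*s - 6*s^2 := by intro s; ring
  simp only [h]
  rw [intervalIntegral.integral_sub
    (Continuous.intervalIntegrable (by fun_prop) _ _)
    (Continuous.intervalIntegrable (by fun_prop) _ _)]
  rw [intervalIntegral.integral_const_mul, intervalIntegral.integral_const_mul,
    integral_id, integral_pow]
  norm_num

/-- The test function on the product space. -/
noncomputable def Gfun (f : CMS S → ℝ) : CMS S × ℝ → ℝ :=
  fun p => f p.1 * (τ p.1)⁻¹ * (6 * (p.2 / τ p.1) * (1 - p.2 / τ p.1))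

lemma bound_aux {c fx B T t : ℝ} (hB : |fx| ≤ B) (hc : 0 < c) (hT : c ≤ T)
    (ht0 : 0 ≤ t) (htT : t ≤ T) :
    |fx * T⁻¹ * (6 * (t / T) * (1 - t / T))| ≤ B * c⁻¹ * (3/2) := by
  have hT0 : 0 < T := hc.trans_le hT
  have hs0 : 0 ≤ t / T := div_nonneg ht0 hT0.le
  have hs1 : t / T ≤ 1 := (div_le_one hT0).2 htT
  have h3 : |6 * (t / T) * (1 - t / T)| ≤ 3/2 := by
    rw [abs_of_nonneg (by nlinarith)]; nlinarith [sq_nonneg (t / T - 1/2)]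
  have h2 : |T⁻¹| ≤ c⁻¹ := by
    rw [abs_of_pos (inv_pos.2 hT0)]
    exact inv_anti₀ hc hT
  calc |fx * T⁻¹ * (6 * (t / T) * (1 - t / T))|
      = |fx| * |T⁻¹| * |6 * (t / T) * (1 - t / T)| := by rw [abs_mul, abs_mul]
    _ ≤ B * c⁻¹ * (3/2) :=
        mul_le_mul (mul_le_mul hB h2 (abs_nonneg _) ((abs_nonneg _).trans hB)) h3
          (abs_nonneg _) (mul_nonneg ((abs_nonneg _).trans hB) (inv_pos.2 hc).le)

lemma gfun_continuous (hτcont : Continuous τ) (c : ℝ) (hc : 0 < c) (hτ : ∀ x, c ≤ τ x)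
    (f : BoundedContinuousFunction (CMS S) ℝ) : Continuous (Gfun S τ f) := by
  have hne : ∀ p : CMS S × ℝ, τ p.1 ≠ 0 := fun p => (hc.trans_le (hτ p.1)).ne'
  have h1 : Continuous fun p : CMS S × ℝ => τ p.1 := hτcont.comp continuous_fst
  have h2 : Continuous fun p : CMS S × ℝ => p.2 / τ p.1 := continuous_snd.div h1 hne
  exact ((f.continuous.comp continuous_fst).mul (h1.inv₀ hne)).mul
    ((continuous_const.mul h2).mul (continuous_const.sub h2))

lemma key (hτcont : Continuous τ) (c : ℝ) (hc : 0 < c) (hτ : ∀ x, c ≤ τ x)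
    (m : Measure (CMS S)) [IsProbabilityMeasure m] (hm : Integrable τ m)
    (f : BoundedContinuousFunction (CMS S) ℝ) :
    ∫ p : Ysp S τ, Gfun S τ f p.val ∂((m.prod volume).comap Subtype.val)
      = ∫ x, f x ∂m := by
  have hY := ysp_measurable S τ hτcont
  have hτ0 : ∀ x, (0:ℝ) < τ x := fun x => hc.trans_le (hτ x)
  rw [integral_subtype_comap hY]
  have hslice : ∀ x : CMS S, Prod.mk x ⁻¹' Ysp S τ = Set.Icc 0 (τ x) := by
    intro x; ext t; simp [Ysp, Set.mem_Icc]
  have hfin : (m.prod volume) (Ysp S τ) < ⊤ := by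
    rw [Measure.prod_apply hY]
    have : ∀ x : CMS S, (volume (Prod.mk x ⁻¹' Ysp S τ)) = ENNReal.ofReal (τ x) := by
      intro x; rw [hslice x, Real.volume_Icc, sub_zero]
    rw [lintegral_congr this]
    exact hm.lintegral_lt_top
  have hGcont := gfun_continuous S τ hτcont c hc hτ f
  have hIO : IntegrableOn (Gfun S τ f) (Ysp S τ) (m.prod volume) := by
    apply Measure.integrableOn_of_bounded hfin.ne hGcont.aestronglyMeasurable
      (M := ‖f‖ * c⁻¹ * (3/2))
    refine (ae_restrict_iff' hY).2 (ae_of_all _ fun p hp => ?_)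
    exact bound_aux (f.norm_coe_le_norm p.1) hc (hτ p.1) hp.1 hp.2
  have hInd : Integrable ((Ysp S τ).indicator (Gfun S τ f)) (m.prod volume) :=
    hIO.integrable_indicator hY
  rw [← integral_indicator hY, MeasureTheory.integral_prod _ hInd]
  refine integral_congr_ae (ae_of_all _ fun x => ?_)
  show (∫ t : ℝ, (Ysp S τ).indicator (Gfun S τ f) (x, t)) = f x
  have hindeq : (fun t => (Ysp S τ).indicator (Gfun S τ f) (x, t))
      = Set.indicator (Set.Icc 0 (τ x)) (fun t => Gfun S τ f (x, t)) := by
    funext t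
    by_cases h : t ∈ Set.Icc 0 (τ x)
    · rw [Set.indicator_of_mem h,
        Set.indicator_of_mem (by simpa [Ysp, Set.mem_Icc] using h)]
    · rw [Set.indicator_of_notMem h,
        Set.indicator_of_notMem (by simpa [Ysp, Set.mem_Icc] using h)]
  rw [hindeq, integral_indicator measurableSet_Icc, integral_Icc_eq_integral_Ioc,
    ← intervalIntegral.integral_of_le (hτ0 x).le]
  have hT0 : τ x ≠ 0 := (hτ0 x).ne'
  simp only [Gfun]
  rw [intervalIntegral.integral_const_mul, intervalIntegral.integral_comp_div
    (f := fun s => 6 * s * (1 - s)) hT0, zero_div, div_self hT0, g_integral]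
  simp only [smul_eq_mul, mul_one]
  field_simp

end


/-- If `νₙ = (μₙ × Leb)/∫τ dμₙ → ν = (μ × Leb)/∫τ dμ` weakly* on the suspension space (testing
against bounded continuous functions respecting the identification `(x,τ(x)) ∼ (σx,0)`), then
`μₙ → μ` weakly* and `∫τ dμₙ → ∫τ dμ`. -/
theorem stmt17 {A : Type*} [Countable A] [TopologicalSpace A] [DiscreteTopology A]
    [MeasurableSpace A] [BorelSpace A]
    (S : A → A → Prop)
    (τ : CMS S → ℝ) (hτcont : Continuous τ) (c : ℝ) (hc : 0 < c) (hτ : ∀ x, c ≤ τ x)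
    (μs : ℕ → Measure (CMS S)) (μ : Measure (CMS S))
    [∀ n, IsProbabilityMeasure (μs n)] [IsProbabilityMeasure μ]
    (hinvs : ∀ n, MeasurePreserving (cmsShift S) (μs n) (μs n))
    (hinv : MeasurePreserving (cmsShift S) μ μ)
    (hints : ∀ n, Integrable τ (μs n)) (hint : Integrable τ μ)
    (νs : ℕ → Measure (Ysp S τ)) (ν : Measure (Ysp S τ))
    (hνs : ∀ n, νs n = (ENNReal.ofReal (∫ x, τ x ∂(μs n)))⁻¹ •
      (((μs n).prod (volume : Measure ℝ)).comap (Subtype.val : Ysp S τ → CMS S × ℝ)))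
    (hν : ν = (ENNReal.ofReal (∫ x, τ x ∂μ))⁻¹ •
      ((μ.prod (volume : Measure ℝ)).comap (Subtype.val : Ysp S τ → CMS S × ℝ)))
    (hw : ∀ F : BoundedContinuousFunction (Ysp S τ) ℝ,
      (∀ (x : CMS S) (y z : Ysp S τ), y.1 = (x, τ x) → z.1 = (cmsShift S x, 0) → F y = F z) →
      Tendsto (fun n => ∫ p, F p ∂(νs n)) atTop (𝓝 (∫ p, F p ∂ν))) :
    (∀ f : BoundedContinuousFunction (CMS S) ℝ,
        Tendsto (fun n => ∫ x, f x ∂(μs n)) atTop (𝓝 (∫ x, f x ∂μ))) ∧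
      Tendsto (fun n => ∫ x, τ x ∂(μs n)) atTop (𝓝 (∫ x, τ x ∂μ)) := by
  have hτ0 : ∀ x, (0:ℝ) < τ x := fun x => hc.trans_le (hτ x)
  set T : ℕ → ℝ := fun n => ∫ x, τ x ∂(μs n) with hT
  set L : ℝ := ∫ x, τ x ∂μ with hL
  have hTc : ∀ n, c ≤ T n := by
    intro n
    calc c = ∫ _ : CMS S, c ∂(μs n) := by simp
      _ ≤ T n := integral_mono (integrable_const c) (hints n) hτ
  have hLc : c ≤ L := by
    calc c = ∫ _ : CMS S, c ∂μ := by simp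
      _ ≤ L := integral_mono (integrable_const c) hint hτ
  have hTne : ∀ n, T n ≠ 0 := fun n => (hc.trans_le (hTc n)).ne'
  have hLne : L ≠ 0 := (hc.trans_le hLc).ne'
  -- the main convergence applied to each bounded continuous f
  have hconv : ∀ f : BoundedContinuousFunction (CMS S) ℝ,
      Tendsto (fun n => (T n)⁻¹ * ∫ x, f x ∂(μs n)) atTop (𝓝 (L⁻¹ * ∫ x, f x ∂μ)) := by
    intro f
    set Fb : BoundedContinuousFunction (Ysp S τ) ℝ :=
      BoundedContinuousFunction.ofNormedAddCommGroup
        (fun p => Gfun S τ f p.val)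
        ((gfun_continuous S τ hτcont c hc hτ f).comp continuous_subtype_val)
        (‖f‖ * c⁻¹ * (3/2))
        (fun p => bound_aux (f.norm_coe_le_norm p.val.1) hc (hτ p.val.1) p.2.1 p.2.2) with hFb
    have hFbapp : ∀ p : Ysp S τ, Fb p = Gfun S τ f p.val := fun p => rfl
    have hbd : ∀ (x : CMS S) (y z : Ysp S τ), y.1 = (x, τ x) → z.1 = (cmsShift S x, 0) →
        Fb y = Fb z := by
      intro x y z hy hz
      rw [hFbapp, hFbapp, hy, hz]
      simp only [Gfun]
      rw [div_self (hτ0 x).ne']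
      simp
    have := hw Fb hbd
    have heq : ∀ n, ∫ p, Fb p ∂(νs n) = (T n)⁻¹ * ∫ x, f x ∂(μs n) := by
      intro n
      rw [hνs n, integral_smul_measure,
        show ∫ x : Ysp S τ, Fb x ∂(Measure.comap Subtype.val ((μs n).prod volume))
            = ∫ x, f x ∂(μs n) from key S τ hτcont c hc hτ (μs n) (hints n) f,
        ENNReal.toReal_inv, ENNReal.toReal_ofReal (hc.le.trans (hTc n))]
      rfl
    have heqL : ∫ p, Fb p ∂ν = L⁻¹ * ∫ x, f x ∂μ := by
      rw [hν, integral_smul_measure,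
        show ∫ x : Ysp S τ, Fb x ∂(Measure.comap Subtype.val (μ.prod volume))
            = ∫ x, f x ∂μ from key S τ hτcont c hc hτ μ hint f,
        ENNReal.toReal_inv, ENNReal.toReal_ofReal (hc.le.trans hLc)]
      rfl
    simpa only [heq, heqL] using this
  -- apply to f = 1 to get convergence of the normalizations
  have hone : Tendsto (fun n => (T n)⁻¹) atTop (𝓝 L⁻¹) := by
    have := hconv 1
    simpa using this
  have hTL : Tendsto T atTop (𝓝 L) := by
    have := hone.inv₀ (inv_ne_zero hLne)
    simpa [inv_inv] using this
  refine ⟨fun f => ?_, hTL⟩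
  have := (hconv f).mul hTL
  have hcongr : ∀ n, (T n)⁻¹ * (∫ x, f x ∂(μs n)) * T n = ∫ x, f x ∂(μs n) := by
    intro n
    rw [mul_comm ((T n)⁻¹), mul_assoc, inv_mul_cancel₀ (hTne n), mul_one]
  rw [show L⁻¹ * (∫ x, f x ∂μ) * L = ∫ x, f x ∂μ by
    rw [mul_comm (L⁻¹), mul_assoc, inv_mul_cancel₀ hLne, mul_one]] at this
  exact this.congr hcongr
end
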